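/- arXiv:math/0308069 — 4 statements merged into one kernel-verified Lean document; each statement's English description precedes it below -/
import Mathlib

section
/- Let k be an infinite field of characteristic zero (or of characteristic p not dividing #G), let G be a finite group, and let V be a kG-submodule of the regular representation kG on which G acts faithfully. Then there exists α ∈ V such that V = (kG)·α and the stabilizer of α in G is trivial. -/
/-!
By Maschke's theorem `kG` is semisimple, so `V = kG·e` for an idempotent `e`, and then
`V = kG·(u e)` for every unit `u`. Faithfulness says that for `g ≠ 1` the `k`-linear map
`x ↦ (g - 1) x e` is nonzero; since `k` is infinite, some `x` lies outside all of their kernels.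
Along the line `t - x` each of these finitely many conditions, and invertibility, fails for only
finitely many `t`, so some `u = t - x` is a unit with `g u e ≠ u e` for all `g ≠ 1`.
-/

theorem spectrum.finite_of_isIntegral {k A : Type*} [Field k] [Ring A] [Algebra k A] {a : A}
    (ha : IsIntegral k a) : (spectrum k a).Finite := by
  cases subsingleton_or_nontrivial A
  · simp [spectrum.of_subsingleton]
  refine (Polynomial.finite_setOfPred_isRoot (minpoly.ne_zero ha)).subset fun t ht => ?_
  have := spectrum.subset_polynomial_aeval a (minpoly k a) ⟨t, ht, rfl⟩
  rwa [minpoly.aeval, spectrum.zero_eq, Set.mem_singleton_iff] at this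

theorem LinearMap.exists_forall_apply_ne_zero {k E F ι : Type*} [Field k] [Infinite k]
    [AddCommGroup E] [Module k E] [AddCommGroup F] [Module k F] [Finite ι]
    (f : ι → E →ₗ[k] F) (hf : ∀ i, f i ≠ 0) : ∃ x, ∀ i, f i x ≠ 0 := by
  by_contra! h
  obtain ⟨i, hi⟩ := Subspace.exists_eq_top_of_iUnion_eq_univ (p := fun i => LinearMap.ker (f i))
    (Set.eq_univ_of_forall fun x => Set.mem_iUnion.mpr (h x))
  exact hf i (LinearMap.ker_eq_top.mp hi)

theorem exists_unit_forall_mul_mul_ne_zero {k A ι : Type*} [Field k] [Infinite k] [Ring A]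
    [Algebra k A] [FiniteDimensional k A] [Finite ι] (c : ι → A) (e : A)
    (hc : ∀ i, ∃ x, c i * x * e ≠ 0) : ∃ u : Aˣ, ∀ i, c i * u * e ≠ 0 := by
  obtain ⟨x, hx⟩ := LinearMap.exists_forall_apply_ne_zero
    (fun i => LinearMap.mulLeft k (c i) ∘ₗ LinearMap.mulRight k e) fun i h => by
      obtain ⟨x, hx⟩ := hc i
      exact hx (by simpa [mul_assoc] using LinearMap.congr_fun h x)
  simp only [LinearMap.comp_apply, LinearMap.mulRight_apply, LinearMap.mulLeft_apply,
    ← mul_assoc] at hx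
  -- `c i * (t - x) * e = 0` exactly when `t • (c i * e) = c i * x * e`
  have hbad : ∀ i, {t : k | t • (c i * e) = c i * x * e}.Subsingleton := fun i t ht s hs =>
    smul_left_injective k (fun h => hx i (by rw [← ht, h, smul_zero] : _)) (ht.trans hs.symm)
  obtain ⟨t, ht⟩ := ((spectrum.finite_of_isIntegral (Algebra.IsIntegral.isIntegral x)).union
    (Set.finite_iUnion fun i => (hbad i).finite)).exists_notMem
  simp only [Set.mem_union, Set.mem_iUnion, Set.mem_ofPred_eq, not_or, not_exists] at ht
  obtain ⟨u, hu⟩ := not_not.mp (spectrum.mem_iff.not.mp ht.1)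
  refine ⟨u, fun i h => ht.2 i ?_⟩
  rw [hu, mul_sub, sub_mul, sub_eq_zero, ← Algebra.commutes, mul_assoc] at h
  rwa [Algebra.smul_def]

theorem IsIdempotentElem.mul_eq_self_of_mem_span {R : Type*} [Ring R] {e v : R}
    (he : IsIdempotentElem e) (hv : v ∈ Ideal.span {e}) : v * e = v := by
  obtain ⟨a, rfl⟩ := Ideal.mem_span_singleton'.mp hv
  rw [mul_assoc, he.eq]

/-- If `k` is an infinite field whose characteristic does not divide `#G`
(e.g. characteristic zero), and `V` is a `kG`-submodule of the regular
representation `kG` on which `G` acts faithfully, then `V` is generated as a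
`kG`-module by a single element `α` whose stabilizer in `G` is trivial. -/
theorem stmt_1 {k : Type*} [Field k] [Infinite k] {G : Type*} [Group G] [Fintype G]
    (hchar : ringChar k = 0 ∨ ¬ (ringChar k ∣ Fintype.card G))
    (V : Submodule (MonoidAlgebra k G) (MonoidAlgebra k G))
    (hfaith : ∀ g : G, (∀ v ∈ V, MonoidAlgebra.of k G g * v = v) → g = 1) :
    ∃ α ∈ V, Submodule.span (MonoidAlgebra k G) {α} = V ∧
      ∀ g : G, MonoidAlgebra.of k G g * α = α → g = 1 := by
  have hcard : ¬ ringChar k ∣ Fintype.card G :=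
    hchar.elim (fun h => by simp [h, Fintype.card_ne_zero]) id
  have : NeZero (Nat.card G : k) := ⟨by rwa [Nat.card_eq_fintype_card, Ne, ringChar.spec]⟩
  obtain ⟨e, he, rfl⟩ := IsSemisimpleRing.ideal_eq_span_idempotent V
  have hmoved : ∀ g : {g : G // g ≠ 1}, ∃ x, (MonoidAlgebra.of k G g - 1) * x * e ≠ 0 := by
    rintro ⟨g, hg⟩
    obtain ⟨v, hv, hgv⟩ := not_forall₂.mp (mt (hfaith g) hg)
    exact ⟨v, by rwa [mul_assoc, he.mul_eq_self_of_mem_span hv, sub_mul, one_mul, sub_ne_zero]⟩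
  obtain ⟨u, hu⟩ := exists_unit_forall_mul_mul_ne_zero (k := k) _ e hmoved
  refine ⟨u * e, Ideal.mul_mem_left _ _ (Ideal.mem_span_singleton_self e), ?_, fun g hg => ?_⟩
  · simpa [Units.smul_def] using Submodule.span_singleton_group_smul_eq _ u e
  · by_contra hne
    exact hu ⟨g, hne⟩ (by rw [sub_mul, sub_mul, one_mul, mul_assoc, hg, sub_self])
end

section
/- Let k be a field of characteristic 0, G a finite group with G = Gal(K/k) for some Galois extension K/k, and suppose the regular representation of G over k contains a faithful n-dimensional subrepresentation. Then there exists α ∈ K with conjugate dimension n(α) = n and degree d(α) = [K:k] = #G over k. -/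
/-! A normal basis `θ` makes `x ↦ x • θ` an isomorphism `k[G] ≃ K` of left `k[G]`-modules, under
which the conjugates `g α` of `α = v • θ` correspond to the translates `g v`. So it suffices to
find `v ∈ V` that generates `V` as a left ideal (then the conjugates of `α` span the image of `V`,
of dimension `n`) and has trivial stabilizer in `G` (then `α` has `#G` distinct conjugates, hence
degree `[K : k]`). By Maschke, `V = k[G] e` with `e` a right unit of `V`; by faithfulness some
`u ∈ V` avoids the finitely many proper subspaces `ker (g - 1) ∩ V`, and `v = u + t • e` has both
properties for all but finitely many `t ∈ k`. -/

open Polynomial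

section LinearAlgebra

variable {k A B : Type*} [Field k] [AddCommGroup A] [Module k A] [AddCommGroup B] [Module k B]

/-- If `s` is a right inverse of `g`, then `f + t • g` can fail to be surjective only when `-t` is
an eigenvalue of `f ∘ s`. -/
theorem LinearMap.finite_setOf_not_surjective_add_smul [FiniteDimensional k B] (f g : A →ₗ[k] B)
    (hg : Function.Surjective g) : {t : k | ¬ Function.Surjective (f + t • g)}.Finite := by
  obtain ⟨s, hs⟩ := g.exists_rightInverse_of_surjective (LinearMap.range_eq_top.2 hg)
  refine ((Module.End.finite_hasEigenvalue (f ∘ₗ s)).preimage neg_injective.injOn).subset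
    fun t ht => ?_
  have hcomp : (f + t • g) ∘ₗ s = f ∘ₗ s + t • (LinearMap.id : B →ₗ[k] B) := by
    rw [LinearMap.add_comp, LinearMap.smul_comp, hs]
  have hnot : ¬ Function.Surjective (f ∘ₗ s + t • (LinearMap.id : B →ₗ[k] B)) := fun hsurj =>
    ht fun b => by
      obtain ⟨b', hb'⟩ := hsurj b
      exact ⟨s b', by rw [← LinearMap.comp_apply, hcomp, hb']⟩
  rw [← LinearMap.injective_iff_surjective, ← LinearMap.ker_eq_bot] at hnot
  have : Module.End.HasEigenvalue (f ∘ₗ s + t • LinearMap.id) 0 := by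
    rwa [Module.End.hasEigenvalue_iff, Module.End.eigenspace_zero]
  simpa using Module.End.hasEigenvalue_add_iff.mp this

theorem Submodule.subsingleton_setOf_add_smul_mem {W : Submodule k A} {u : A} (hu : u ∉ W)
    (e : A) : {t : k | u + t • e ∈ W}.Subsingleton := by
  intro t ht s hs
  by_contra hts
  have he : e ∈ W := by
    have := W.smul_mem (t - s)⁻¹ (W.sub_mem ht hs)
    rwa [add_sub_add_left_eq_sub, ← sub_smul, smul_smul, inv_mul_cancel₀ (sub_ne_zero.2 hts),
      one_smul] at this
  exact hu (by simpa using W.sub_mem ht (W.smul_mem t he))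

theorem Submodule.exists_mem_forall_notMem_of_not_le [Infinite k] {ι : Type*} [Finite ι]
    (V : Submodule k A) (W : ι → Submodule k A) (hW : ∀ i, ¬ V ≤ W i) :
    ∃ u ∈ V, ∀ i, u ∉ W i := by
  have hcover : ⋃ i, ((W i).comap V.subtype : Set V) ≠ Set.univ := fun h => by
    obtain ⟨i, hi⟩ := Subspace.exists_eq_top_of_iUnion_eq_univ h
    exact hW i fun x hx => by simpa using (Submodule.eq_top_iff'.1 hi) ⟨x, hx⟩
  obtain ⟨⟨u, huV⟩, hu⟩ := (Set.ne_univ_iff_exists_notMem _).1 hcover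
  exact ⟨u, huV, fun i hi => hu (Set.mem_iUnion.2 ⟨i, hi⟩)⟩

end LinearAlgebra

section LeftIdeal

variable {k A : Type*} [Field k] [Ring A] [Algebra k A]

theorem Submodule.exists_mul_eq_self_of_mul_mem [IsSemisimpleRing A] (V : Submodule k A)
    (hV : ∀ r, ∀ x ∈ V, r * x ∈ V) : ∃ e ∈ V, ∀ x ∈ V, x * e = x := by
  let I : Ideal A := { V.toAddSubmonoid with smul_mem' := hV }
  obtain ⟨e, he, hIe⟩ := IsSemisimpleRing.ideal_eq_span_idempotent I
  have hmem : ∀ x, x ∈ V ↔ x ∈ Ideal.span {e} := fun x => by rw [← hIe]; rfl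
  refine ⟨e, (hmem e).2 (Ideal.subset_span rfl), fun x hx => ?_⟩
  obtain ⟨r, rfl⟩ := Ideal.mem_span_singleton'.1 ((hmem x).1 hx)
  rw [mul_assoc, he.eq]

theorem Submodule.finite_setOf_range_mulRight_ne [FiniteDimensional k A] (V : Submodule k A)
    (hV : ∀ r, ∀ x ∈ V, r * x ∈ V) {u e : A} (hu : u ∈ V) (he : e ∈ V)
    (hunit : ∀ x ∈ V, x * e = x) :
    {t : k | LinearMap.range (LinearMap.mulRight k (u + t • e)) ≠ V}.Finite := by
  let f := (LinearMap.mulRight k u).codRestrict V (hV · u hu)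
  let g := (LinearMap.mulRight k e).codRestrict V (hV · e he)
  have hg : Function.Surjective g := fun x => ⟨x, Subtype.ext (hunit x x.2)⟩
  refine (LinearMap.finite_setOf_not_surjective_add_smul f g hg).subset fun t ht hsurj => ht ?_
  have hcomp : V.subtype ∘ₗ (f + t • g) = LinearMap.mulRight k (u + t • e) := by
    ext x
    simp only [LinearMap.comp_apply, LinearMap.add_apply, LinearMap.smul_apply, map_add,
      map_smul, Submodule.subtype_apply, LinearMap.mulRight_apply, mul_add, mul_smul_comm]
    rfl
  rw [← hcomp, LinearMap.range_comp, LinearMap.range_eq_top.2 hsurj, Submodule.map_top,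
    Submodule.range_subtype]

end LeftIdeal

namespace MonoidAlgebra

section Semiring

variable {k G : Type*} [CommSemiring k] [Monoid G]

theorem span_range_of : Submodule.span k (Set.range (of k G)) = ⊤ := by
  convert (MonoidAlgebra.basis G k).span_eq
  ext; simp

theorem span_range_of_mul (v : MonoidAlgebra k G) :
    Submodule.span k (Set.range fun g => of k G g * v) =
      LinearMap.range (LinearMap.mulRight k v) := by
  rw [LinearMap.range_eq_map, ← span_range_of, Submodule.map_span, ← Set.range_comp]
  rfl

theorem mul_mem_of_forall_of_mul_mem {V : Submodule k (MonoidAlgebra k G)}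
    (hV : ∀ g, ∀ x ∈ V, of k G g * x ∈ V) : ∀ r, ∀ x ∈ V, r * x ∈ V := by
  intro r x hx
  have : Submodule.span k (Set.range (of k G)) ≤ V.comap (LinearMap.mulRight k x) :=
    Submodule.span_le.2 (Set.range_subset_iff.2 fun g => hV g x hx)
  rw [span_range_of] at this
  exact this Submodule.mem_top

end Semiring

variable {k G : Type*} [Field k] [Group G]

theorem exists_generator_with_trivial_stabilizer [Infinite k] [Finite G]
    [NeZero (Nat.card G : k)] (V : Submodule k (MonoidAlgebra k G))
    (hV : ∀ g, ∀ x ∈ V, of k G g * x ∈ V) (hfaith : ∀ g, (∀ x ∈ V, of k G g * x = x) → g = 1) :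
    ∃ v ∈ V, LinearMap.range (LinearMap.mulRight k v) = V ∧ ∀ g, of k G g * v = v → g = 1 := by
  have hmul := mul_mem_of_forall_of_mul_mem hV
  obtain ⟨e, he, hunit⟩ := V.exists_mul_eq_self_of_mul_mem hmul
  let W : {g : G // g ≠ 1} → Submodule k (MonoidAlgebra k G) := fun g =>
    LinearMap.ker (LinearMap.mulLeft k (of k G g) - LinearMap.id)
  obtain ⟨u, hu, huW⟩ := V.exists_mem_forall_notMem_of_not_le W fun g hle =>
    g.2 (hfaith g fun x hx => sub_eq_zero.1 (hle hx))
  have hfix : ∀ g, {t : k | u + t • e ∈ W g}.Finite := fun g =>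
    (Submodule.subsingleton_setOf_add_smul_mem (huW g) e).finite
  obtain ⟨t, ht⟩ := ((V.finite_setOf_range_mulRight_ne hmul hu he hunit).union
    (Set.finite_iUnion hfix)).infinite_compl.nonempty
  simp only [Set.mem_compl_iff, Set.mem_union, Set.mem_ofPred_eq, Set.mem_iUnion, not_or,
    not_not, not_exists] at ht
  refine ⟨u + t • e, V.add_mem hu (V.smul_mem t he), ht.1, fun g hg => ?_⟩
  by_contra hg1
  exact ht.2 ⟨g, hg1⟩ (by simp only [W, LinearMap.mem_ker, LinearMap.sub_apply,
    LinearMap.mulLeft_apply, LinearMap.id_apply, hg, sub_self])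

end MonoidAlgebra

section Galois

variable {k K : Type*} [Field k] [Field K] [Algebra k K]

theorem rootSet_minpoly_eq_range_algEquiv_apply [Normal k K] (α : K) :
    (minpoly k α).rootSet K = Set.range fun σ : K ≃ₐ[k] K => σ α := by
  ext β
  rw [← isConjRoot_iff_mem_minpoly_rootSet (Algebra.IsIntegral.isIntegral α), IsConjRoot.comm,
    isConjRoot_iff_exists_algEquiv, Set.mem_range]

variable [FiniteDimensional k K] [IsGalois k K]

theorem natDegree_minpoly_eq_finrank_of_stabilizer_trivial {α : K}
    (hα : ∀ σ : K ≃ₐ[k] K, σ α = α → σ = 1) :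
    (minpoly k α).natDegree = Module.finrank k K := by
  classical
  have hinj : Function.Injective fun σ : K ≃ₐ[k] K => σ α := fun σ τ (h : σ α = τ α) =>
    inv_mul_eq_one.1 (hα _ (by rw [AlgEquiv.mul_apply, ← h]; exact σ.symm_apply_apply α))
  rw [← card_rootSet_eq_natDegree (Algebra.IsSeparable.isSeparable k α)
    (Normal.splits inferInstance α), ← Nat.card_eq_fintype_card,
    rootSet_minpoly_eq_range_algEquiv_apply, Nat.card_range_of_injective hinj,
    IsGalois.card_aut_eq_finrank]

variable (k K) in
noncomputable def normalBasisEquiv : MonoidAlgebra k (K ≃ₐ[k] K) ≃ₗ[k] K :=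
  (MonoidAlgebra.basis _ k).equiv (IsGalois.normalBasis k K) (Equiv.refl _)

theorem normalBasisEquiv_single (τ : K ≃ₐ[k] K) :
    normalBasisEquiv k K (MonoidAlgebra.single τ 1) = τ (IsGalois.normalBasis k K 1) := by
  rw [← MonoidAlgebra.basis_apply, normalBasisEquiv, Module.Basis.equiv_apply, Equiv.refl_apply,
    IsGalois.normalBasis_apply]

theorem normalBasisEquiv_of_mul (σ : K ≃ₐ[k] K) (x : MonoidAlgebra k (K ≃ₐ[k] K)) :
    normalBasisEquiv k K (MonoidAlgebra.of k _ σ * x) = σ (normalBasisEquiv k K x) := by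
  suffices (normalBasisEquiv k K).toLinearMap ∘ₗ LinearMap.mulLeft k (MonoidAlgebra.of k _ σ) =
      σ.toLinearMap ∘ₗ (normalBasisEquiv k K).toLinearMap from congr($this x)
  refine (MonoidAlgebra.basis _ k).ext fun τ => ?_
  simp [MonoidAlgebra.of_apply, normalBasisEquiv_single]

end Galois

/-- If `K/k` is a Galois extension of fields of characteristic zero with group
`G = Gal(K/k)`, and the regular representation `kG` contains a `G`-stable
`k`-subspace `V` of dimension `n` on which `G` acts faithfully, then there is
`α ∈ K` of conjugate dimension `n` and degree `[K:k] = #G` over `k`. -/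
theorem stmt_3 {k K : Type*} [Field k] [CharZero k] [Field K] [Algebra k K]
    [FiniteDimensional k K] [IsGalois k K] (n : ℕ)
    (V : Submodule k (MonoidAlgebra k (K ≃ₐ[k] K)))
    (hstable : ∀ g : K ≃ₐ[k] K, ∀ x ∈ V, MonoidAlgebra.of k (K ≃ₐ[k] K) g * x ∈ V)
    (hdim : Module.finrank k V = n)
    (hfaith : ∀ g : K ≃ₐ[k] K,
      (∀ x ∈ V, MonoidAlgebra.of k (K ≃ₐ[k] K) g * x = x) → g = 1) :
    ∃ α : K, Module.finrank k (Submodule.span k ((minpoly k α).rootSet K)) = n ∧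
      (minpoly k α).natDegree = Module.finrank k K ∧
      Module.finrank k K = Nat.card (K ≃ₐ[k] K) := by
  obtain ⟨v, -, hgen, hstab⟩ :=
    MonoidAlgebra.exists_generator_with_trivial_stabilizer V hstable hfaith
  set L := normalBasisEquiv k K
  have hconj : ∀ σ : K ≃ₐ[k] K, σ (L v) = L (MonoidAlgebra.of k _ σ * v) := fun σ =>
    (normalBasisEquiv_of_mul σ v).symm
  refine ⟨L v, ?_, natDegree_minpoly_eq_finrank_of_stabilizer_trivial fun σ hσ =>
    hstab σ (L.injective (by rw [← hconj, hσ])), (IsGalois.card_aut_eq_finrank k K).symm⟩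
  rw [rootSet_minpoly_eq_range_algEquiv_apply, funext hconj, Set.range_comp',
    Submodule.span_image_linearEquiv, MonoidAlgebra.span_range_of_mul, hgen,
    LinearEquiv.finrank_map_eq, hdim]
end

section
/- The invariant field Q(x₁,…,x₆)^G for G = ⟨W(E₆), −I⟩ ≤ GL₆(Q) is purely transcendental over Q: if Q(x₁,…,x₆)^{W(E₆)} = Q(I₂,I₅,I₆,I₈,I₉,I₁₂) with I_j homogeneous of degree j, then Q(x₁,…,x₆)^G = Q(I₂,I₆,I₈,I₁₂,I₅², I₅I₉). -/
/-!
Since `−I` acts on a homogeneous polynomial of degree `n` by `(−1)ⁿ`, it fixes `I₂, I₆, I₈, I₁₂`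
and negates `I₅, I₉`. Hence `F = ℚ(I₂, I₆, I₈, I₁₂, I₅², I₅I₉)` is fixed by `G`, and
`ℚ(I₂, …, I₁₂) = F(I₅)` (as `I₉ = I₅I₉ / I₅`) is a quadratic extension of `F` on which `−I`
acts by `a + bI₅ ↦ a − bI₅`. Its `−I`-fixed part, which is the fixed field of `G`, is thus `F`.
-/

open MvPolynomial IntermediateField

theorem MvPolynomial.IsHomogeneous.aeval_neg {σ R S : Type*} [CommRing R] [CommRing S]
    [Algebra R S] {p : MvPolynomial σ R} {n : ℕ} (hp : p.IsHomogeneous n) (f : σ → S) :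
    MvPolynomial.aeval (-f) p = (-1) ^ n * MvPolynomial.aeval f p := by
  rw [aeval_def, aeval_def, eval₂_eq, eval₂_eq, Finset.mul_sum]
  refine Finset.sum_congr rfl fun d hd => ?_
  have hsum : ∑ i ∈ d.support, d i = n := by
    simpa [Finsupp.weight_apply, Finsupp.sum] using hp (mem_support_iff.mp hd)
  rw [← hsum, ← Finset.prod_pow_eq_pow_sum, mul_left_comm, ← Finset.prod_mul_distrib]
  simp only [Pi.neg_apply, neg_pow (f _)]

section SignAction

variable {σ R L : Type*} [CommRing R] [CommRing L] [Algebra (MvPolynomial σ R) L] [Algebra R L]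
  [IsScalarTower R (MvPolynomial σ R) L] {E : Type*} [FunLike E L L] [AlgHomClass E R L L] (ν : E)

theorem map_algebraMap_of_isHomogeneous {p : MvPolynomial σ R} {n : ℕ}
    (hν : ∀ i, ν (algebraMap (MvPolynomial σ R) L (X i)) = -algebraMap (MvPolynomial σ R) L (X i))
    (hp : p.IsHomogeneous n) :
    ν (algebraMap (MvPolynomial σ R) L p) = (-1) ^ n * algebraMap (MvPolynomial σ R) L p := by
  have hcomp : (AlgHomClass.toAlgHom ν).comp (IsScalarTower.toAlgHom R _ L) =
      aeval (-fun i => algebraMap (MvPolynomial σ R) L (X i)) :=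
    algHom_ext fun i => by simpa using hν i
  have hid : aeval (fun i => algebraMap (MvPolynomial σ R) L (X i)) =
      IsScalarTower.toAlgHom R _ L :=
    algHom_ext fun i => by simp
  have := DFunLike.congr_fun hcomp p
  simp only [AlgHom.comp_apply, AlgHom.coe_coe, IsScalarTower.coe_toAlgHom'] at this
  rw [this, hp.aeval_neg, hid, IsScalarTower.coe_toAlgHom']

theorem map_algebraMap_of_isHomogeneous_of_even {p : MvPolynomial σ R} {n : ℕ}
    (hν : ∀ i, ν (algebraMap (MvPolynomial σ R) L (X i)) = -algebraMap (MvPolynomial σ R) L (X i))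
    (hp : p.IsHomogeneous n) (hn : Even n) :
    ν (algebraMap (MvPolynomial σ R) L p) = algebraMap (MvPolynomial σ R) L p := by
  rw [map_algebraMap_of_isHomogeneous ν hν hp, hn.neg_one_pow, one_mul]

end SignAction

namespace IntermediateField

variable {k L : Type*} [Field k] [Field L] [Algebra k L]

theorem mem_fixedField_sup_closure_singleton_iff {H : Subgroup (L ≃ₐ[k] L)} {g : L ≃ₐ[k] L}
    {x : L} : x ∈ fixedField (H ⊔ Subgroup.closure {g}) ↔ x ∈ fixedField H ∧ g x = x := by
  have hstab (K : Subgroup (L ≃ₐ[k] L)) : x ∈ fixedField K ↔ K ≤ MulAction.stabilizer _ x :=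
    ⟨fun h σ hσ => h ⟨σ, hσ⟩, fun h σ => h σ.2⟩
  rw [hstab, hstab, sup_le_iff, Subgroup.closure_le, Set.singleton_subset_iff]
  rfl

theorem exists_eq_add_mul_of_mem_adjoin_simple {F : IntermediateField k L} {t : L}
    (ht : t ^ 2 ∈ F) {x : L} (hx : x ∈ F⟮t⟯) : ∃ a ∈ F, ∃ b ∈ F, x = a + b * t := by
  have hint : IsIntegral F t :=
    ⟨Polynomial.X ^ 2 - Polynomial.C ⟨t ^ 2, ht⟩, Polynomial.monic_X_pow_sub_C _ two_ne_zero,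
      by simp [Polynomial.eval₂_sub]⟩
  rw [← mem_toSubalgebra, adjoin_simple_toSubalgebra_of_isAlgebraic hint.isAlgebraic] at hx
  induction hx using Algebra.adjoin_induction with
  | mem z hz => exact ⟨0, zero_mem F, 1, one_mem F, by rw [Set.mem_singleton_iff.mp hz]; ring⟩
  | algebraMap c => exact ⟨c, c.2, 0, zero_mem F, by simp⟩
  | add y z _ _ hy hz =>
    obtain ⟨a, ha, b, hb, rfl⟩ := hy
    obtain ⟨a', ha', b', hb', rfl⟩ := hz
    exact ⟨a + a', add_mem ha ha', b + b', add_mem hb hb', by ring⟩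
  | mul y z _ _ hy hz =>
    obtain ⟨a, ha, b, hb, rfl⟩ := hy
    obtain ⟨a', ha', b', hb', rfl⟩ := hz
    exact ⟨a * a' + b * b' * t ^ 2, add_mem (mul_mem ha ha') (mul_mem (mul_mem hb hb') ht),
      a * b' + a' * b, add_mem (mul_mem ha hb') (mul_mem ha' hb), by ring⟩

theorem mem_of_mem_adjoin_simple_of_map_eq_self {F : IntermediateField k L} (ν : L →+* L)
    (hνF : ∀ y ∈ F, ν y = y) {t : L} (ht : t ^ 2 ∈ F) (hνt : ν t = -t) (h2 : (2 : L) ≠ 0)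
    {x : L} (hx : x ∈ F⟮t⟯) (hνx : ν x = x) : x ∈ F := by
  obtain ⟨a, ha, b, hb, rfl⟩ := exists_eq_add_mul_of_mem_adjoin_simple ht hx
  rw [map_add, map_mul, hνF a ha, hνF b hb, hνt] at hνx
  have h2bt : 2 * (b * t) = 0 := by linear_combination -hνx
  have hbt : b * t = 0 := (mul_eq_zero.mp h2bt).resolve_left h2
  simpa [hbt] using ha

theorem fixedField_sup_closure_singleton_eq {H : Subgroup (L ≃ₐ[k] L)} {ν : L ≃ₐ[k] L}
    {S : Set L} {s t : L} (hH : fixedField H = adjoin k (S ∪ {s, t})) (hνS : ∀ y ∈ S, ν y = y)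
    (hνs : ν s = -s) (hνt : ν t = -t) (hs : s ≠ 0) (h2 : (2 : L) ≠ 0) :
    fixedField (H ⊔ Subgroup.closure {ν}) = adjoin k (S ∪ {s ^ 2, s * t}) := by
  set F := adjoin k (S ∪ {s ^ 2, s * t})
  have hmemH (y) (hy : y ∈ S ∪ {s, t}) : y ∈ fixedField H := hH ▸ subset_adjoin k _ hy
  have hFG : F ≤ fixedField (H ⊔ Subgroup.closure {ν}) := by
    refine adjoin_le_iff.mpr fun y hy => mem_fixedField_sup_closure_singleton_iff.mpr ?_
    rcases hy with hy | rfl | rfl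
    · exact ⟨hmemH y (.inl hy), hνS y hy⟩
    · exact ⟨pow_mem (hmemH s (by simp)) 2, by rw [map_pow, hνs, neg_sq]⟩
    · exact ⟨mul_mem (hmemH s (by simp)) (hmemH t (by simp)),
        by rw [map_mul, hνs, hνt, neg_mul_neg]⟩
  have hF (y) (hy : y ∈ S ∪ {s ^ 2, s * t}) : y ∈ F⟮s⟯ :=
    adjoin.range_algebraMap_subset _ _ ⟨⟨y, subset_adjoin _ _ hy⟩, rfl⟩
  have hHF : fixedField H ≤ (F⟮s⟯).restrictScalars k := by
    rw [hH, adjoin_le_iff]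
    rintro y (hy | rfl | rfl)
    · exact hF y (.inl hy)
    · exact mem_adjoin_simple_self F y
    · rw [← mul_div_cancel_left₀ y hs]
      exact div_mem (hF _ (by simp)) (mem_adjoin_simple_self F s)
  refine le_antisymm (fun x hx => ?_) hFG
  obtain ⟨hxH, hxν⟩ := mem_fixedField_sup_closure_singleton_iff.mp hx
  exact mem_of_mem_adjoin_simple_of_map_eq_self ν.toRingHom
    (fun y hy => (mem_fixedField_sup_closure_singleton_iff.mp (hFG hy)).2)
    (subset_adjoin _ _ (by simp)) hνs h2 (hHF hxH) hxν

end IntermediateField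

/-- Pure transcendence of the invariant field of `G = ⟨W(E₆), −I⟩` ≤ GL₆(ℚ):
let `L = ℚ(x₁,…,x₆)`, `ν` the automorphism with `ν(xᵢ) = −xᵢ` (induced by
`−I`), and `W` a subgroup of `Aut(L/ℚ)` (the Weyl group `W(E₆)`) whose fixed
field is `ℚ(I₂,I₅,I₆,I₈,I₉,I₁₂)` where `I : Fin 6 → ℚ[x₁,…,x₆]` are
algebraically independent homogeneous invariants of degrees `2,5,6,8,9,12`
(Chevalley).  Then the fixed field of `G = ⟨W, ν⟩` equals
`ℚ(I₂,I₆,I₈,I₁₂,I₅², I₅·I₉)`, so it is purely transcendental over `ℚ`. -/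
theorem stmt_5
    (ν : FractionRing (MvPolynomial (Fin 6) ℚ) ≃ₐ[ℚ] FractionRing (MvPolynomial (Fin 6) ℚ))
    (hν : ∀ i : Fin 6,
      ν (algebraMap (MvPolynomial (Fin 6) ℚ) (FractionRing (MvPolynomial (Fin 6) ℚ)) (X i)) =
        - algebraMap (MvPolynomial (Fin 6) ℚ) (FractionRing (MvPolynomial (Fin 6) ℚ)) (X i))
    (W : Subgroup (FractionRing (MvPolynomial (Fin 6) ℚ) ≃ₐ[ℚ]
      FractionRing (MvPolynomial (Fin 6) ℚ)))
    (I : Fin 6 → MvPolynomial (Fin 6) ℚ)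
    (hdeg : ∀ j : Fin 6, (I j).IsHomogeneous (![2, 5, 6, 8, 9, 12] j))
    (hind : AlgebraicIndependent ℚ fun j : Fin 6 =>
      algebraMap (MvPolynomial (Fin 6) ℚ) (FractionRing (MvPolynomial (Fin 6) ℚ)) (I j))
    (hfix : IntermediateField.fixedField W =
      IntermediateField.adjoin ℚ (Set.range fun j : Fin 6 =>
        algebraMap (MvPolynomial (Fin 6) ℚ) (FractionRing (MvPolynomial (Fin 6) ℚ)) (I j))) :
    IntermediateField.fixedField (W ⊔ Subgroup.closure {ν}) =
      IntermediateField.adjoin ℚ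
        (((fun p : MvPolynomial (Fin 6) ℚ =>
            algebraMap (MvPolynomial (Fin 6) ℚ) (FractionRing (MvPolynomial (Fin 6) ℚ)) p) ''
          {I 0, I 2, I 3, I 5, I 1 ^ 2, I 1 * I 4}) :
          Set (FractionRing (MvPolynomial (Fin 6) ℚ))) := by
  set φ := algebraMap (MvPolynomial (Fin 6) ℚ) (FractionRing (MvPolynomial (Fin 6) ℚ))
  have hrange : Set.range (fun j => φ (I j)) =
      φ '' {I 0, I 2, I 3, I 5} ∪ {φ (I 1), φ (I 4)} := by
    ext y
    simp only [Set.mem_range, Fin.exists_fin_succ, Set.mem_union, Set.mem_image,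
      Set.mem_insert_iff, Set.mem_singleton_iff]
    grind
  have himage : φ '' {I 0, I 2, I 3, I 5, I 1 ^ 2, I 1 * I 4} =
      φ '' {I 0, I 2, I 3, I 5} ∪ {φ (I 1) ^ 2, φ (I 1) * φ (I 4)} := by
    ext y
    simp only [Set.mem_union, Set.mem_image, Set.mem_insert_iff, Set.mem_singleton_iff]
    grind
  have hodd {j : Fin 6} (hj : Odd (![2, 5, 6, 8, 9, 12] j)) : ν (φ (I j)) = -φ (I j) := by
    rw [map_algebraMap_of_isHomogeneous ν hν (hdeg j), hj.neg_one_pow, neg_one_mul]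
  rw [himage]
  refine fixedField_sup_closure_singleton_eq (hfix.trans (congrArg _ hrange)) ?_
    (hodd (by decide)) (hodd (by decide)) (hind.ne_zero 1) two_ne_zero
  rintro _ ⟨p, hp, rfl⟩
  rcases hp with rfl | rfl | rfl | rfl <;>
    exact map_algebraMap_of_isHomogeneous_of_even ν hν (hdeg _) (by decide)
end

section
/- Let β be a real sixth root of 2 and ω₃ a primitive cube root of unity. Then α = β + 3ω₃β is an algebraic number of degree 12 over Q whose conjugates span a 2-dimensional Q-vector space, and its minimal polynomial over Q is y¹² + 572y⁶ + 470596. -/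
open Polynomial IntermediateField

/-!
Write `α = (1 + 3ω)β` and `α' = (1 + 3ω²)β = (-2 - 3ω)β`. Then `α⁶ = -646 - 720ω` and
`α'⁶ = 74 + 720ω`, so `y¹² + 572y⁶ + 470596 = (y⁶ - α⁶)(y⁶ - α'⁶)`. Its roots are the products of
`α` and `α'` with sixth roots of unity; since the `ℚ`-span of `β` and `ωβ` is stable under
multiplication by `ω`, they all lie in it, and `β = -α - α'`, `ωβ = (α - β)/3` show that they
span it.

The field `ℚ(α)` contains `ω = -(α⁶ + 646)/720` and hence `β`, so it strictly contains the real
field `ℚ(β)`, of degree `6` by Eisenstein. Hence `[ℚ(α) : ℚ] ≥ 12`, and the degree-`12` polynomial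
above is the minimal polynomial of `α`.
-/
theorem irreducible_X_pow_sub_C_prime {p : ℕ} (hp : p.Prime) {n : ℕ} (hn : 0 < n) :
    Irreducible (X ^ n - C (p : ℚ)) := by
  have hm : (X ^ n - C (p : ℤ)).Monic := monic_X_pow_sub_C _ hn.ne'
  have hdeg : (X ^ n - C (p : ℤ)).natDegree = n := natDegree_X_pow_sub_C
  have hP : (Ideal.span {(p : ℤ)}).IsPrime :=
    (Ideal.span_singleton_prime (by exact_mod_cast hp.ne_zero)).mpr
      (Nat.prime_iff_prime_int.mp hp)
  have hz : Irreducible (X ^ n - C (p : ℤ)) := by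
    refine (hm.isEisensteinAt_of_mem_of_notMem hP.ne_top (fun hi => ?_) ?_).irreducible hP
      hm.isPrimitive (by omega)
    · rw [hdeg] at hi
      simp only [coeff_sub, coeff_X_pow, coeff_C, hi.ne, if_false, zero_sub,
        Ideal.mem_span_singleton]
      split_ifs <;> simp
    · rw [Ideal.span_singleton_pow, Ideal.mem_span_singleton]
      simp only [coeff_sub, coeff_X_pow, coeff_C, hn.ne, if_false, if_true, zero_sub, dvd_neg]
      norm_cast
      intro h
      nlinarith [Nat.le_of_dvd hp.pos h, hp.two_le]
  simpa using (hm.irreducible_iff_irreducible_map_fraction_map (K := ℚ)).mp hz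

theorem finrank_adjoin_of_pow_eq_prime {K : Type*} [Field K] [CharZero K] {p : ℕ} (hp : p.Prime)
    {n : ℕ} (hn : 0 < n) {x : K} (hx : x ^ n = p) : Module.finrank ℚ ℚ⟮x⟯ = n := by
  have hint : IsIntegral ℚ x := ⟨X ^ n - C (p : ℚ), monic_X_pow_sub_C _ hn.ne', by simp [hx]⟩
  rw [adjoin.finrank hint, ← minpoly.eq_of_irreducible_of_monic
    (irreducible_X_pow_sub_C_prime hp hn) (by simp [hx]) (monic_X_pow_sub_C _ hn.ne'),
    natDegree_X_pow_sub_C]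

theorem im_eq_zero_of_mem_adjoin_ofReal {r : ℝ} {z : ℂ} (hz : z ∈ ℚ⟮(r : ℂ)⟯) : z.im = 0 := by
  have hle : ℚ⟮(r : ℂ)⟯ ≤ (Complex.ofRealAm.restrictScalars ℚ).fieldRange :=
    adjoin_simple_le_iff.mpr ⟨r, rfl⟩
  obtain ⟨s, rfl⟩ := hle hz
  exact Complex.ofReal_im s

theorem IsPrimitiveRoot.sq_add_self_add_one {R : Type*} [CommRing R] [IsDomain R] {ζ : R}
    (h : IsPrimitiveRoot ζ 3) : ζ ^ 2 + ζ + 1 = 0 := by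
  have := h.geom_sum_eq_zero (by norm_num)
  simp only [Finset.sum_range_succ, Finset.sum_range_zero] at this
  linear_combination this

theorem Complex.im_ne_zero_of_sq_add_self_add_one {ω : ℂ} (h : ω ^ 2 + ω + 1 = 0) : ω.im ≠ 0 := by
  intro him
  have hre := congrArg Complex.re h
  simp only [pow_two, add_re, mul_re, him, mul_zero, sub_zero, one_re, zero_re] at hre
  nlinarith [sq_nonneg (ω.re + 1 / 2)]

theorem IntermediateField.two_mul_finrank_le_of_lt {K L : Type*} [Field K] [Field L]
    [Algebra K L] {F E : IntermediateField K L} [FiniteDimensional K E] (h : F < E) :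
    2 * Module.finrank K F ≤ Module.finrank K E := by
  obtain ⟨k, hk⟩ := finrank_dvd_of_le_right h.le
  have hne : Module.finrank K F ≠ Module.finrank K E := fun he =>
    h.ne (eq_of_le_of_finrank_eq h.le he)
  have hpos : 0 < Module.finrank K E := Module.finrank_pos
  rcases k with _ | _ | k
  · omega
  · omega
  · rw [hk]; nlinarith

theorem pow_mul_mem_of_mul_mem {R M : Type*} [Semiring R] [Semiring M] [Module R M]
    {N : Submodule R M} {ω : M} (hN : ∀ z ∈ N, ω * z ∈ N) {a : M} (ha : a ∈ N) (i : ℕ) :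
    ω ^ i * a ∈ N := by
  induction i with
  | zero => simpa using ha
  | succ i ih => simpa [pow_succ', mul_assoc] using hN _ ih

theorem mem_of_pow_eq_pow_of_mul_mem {R K : Type*} [Semiring R] [Field K] [Module R K]
    {N : Submodule R K} {n : ℕ} [NeZero n] {ω : K} (hω : IsPrimitiveRoot ω n)
    (hN : ∀ z ∈ N, ω * z ∈ N) {a y : K} (ha : a ∈ N) (hy : y ^ n = a ^ n) : y ∈ N := by
  rcases eq_or_ne a 0 with rfl | ha0
  · rw [zero_pow (NeZero.ne n), pow_eq_zero_iff (NeZero.ne n)] at hy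
    exact hy ▸ N.zero_mem
  obtain ⟨i, -, hi⟩ :=
    hω.eq_pow_of_pow_eq_one (ξ := y / a) (by rw [div_pow, hy, div_self (pow_ne_zero _ ha0)])
  rw [← div_mul_cancel₀ y ha0, ← hi]
  exact pow_mul_mem_of_mul_mem hN ha i

theorem mem_of_pow_six_eq_pow_six {R K : Type*} [Ring R] [Field K] [Module R K]
    {N : Submodule R K} {ω : K} (hω : IsPrimitiveRoot ω 3) (hN : ∀ z ∈ N, ω * z ∈ N) {a y : K}
    (ha : a ∈ N) (hy : y ^ 6 = a ^ 6) : y ∈ N := by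
  have : (y ^ 3 - a ^ 3) * (y ^ 3 - (-a) ^ 3) = 0 := by linear_combination hy
  rcases mul_eq_zero.mp this with h | h
  · exact mem_of_pow_eq_pow_of_mul_mem hω hN ha (sub_eq_zero.mp h)
  · exact mem_of_pow_eq_pow_of_mul_mem hω hN (N.neg_mem ha) (sub_eq_zero.mp h)

theorem mul_mem_span_pair {ω : ℂ} (hω : ω ^ 2 + ω + 1 = 0) (β : ℂ) {z : ℂ}
    (hz : z ∈ Submodule.span ℚ {β, ω * β}) : ω * z ∈ Submodule.span ℚ {β, ω * β} := by
  obtain ⟨s, t, rfl⟩ := Submodule.mem_span_pair.mp hz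
  refine Submodule.mem_span_pair.mpr ⟨-t, s - t, ?_⟩
  simp only [Rat.smul_def, Rat.cast_neg, Rat.cast_sub]
  linear_combination (-t * β) * hω

theorem linearIndependent_pair_self_mul {ω β : ℂ} (hω : ω.im ≠ 0) (hβ : β ≠ 0) :
    LinearIndependent ℚ ![β, ω * β] := by
  rw [LinearIndependent.pair_iff]
  intro s t hst
  simp only [Rat.smul_def] at hst
  have h1 : (s : ℂ) + t * ω = 0 := by
    have : ((s : ℂ) + t * ω) * β = 0 := by linear_combination hst
    simpa [hβ] using this
  have ht : t = 0 := by
    have := congrArg Complex.im h1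
    simpa [hω] using this
  subst ht
  simpa using h1

theorem finrank_span_pair_self_mul {ω β : ℂ} (hω : ω.im ≠ 0) (hβ : β ≠ 0) :
    Module.finrank ℚ (Submodule.span ℚ {β, ω * β}) = 2 := by
  rw [← Matrix.range_cons_cons_empty,
    finrank_span_eq_card (linearIndependent_pair_self_mul hω hβ), Fintype.card_fin]

section

variable {ω β : ℂ} (hω : ω ^ 2 + ω + 1 = 0) (hβ : β ^ 6 = 2)
include hω hβ

theorem pow_six_one_add_three_mul_mul : ((1 + 3 * ω) * β) ^ 6 = -646 - 720 * ω := by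
  linear_combination (1 + 3 * ω) ^ 6 * hβ
    + (1458 * ω ^ 4 + 1458 * ω ^ 3 - 486 * ω ^ 2 + 108 * ω + 648) * hω

theorem pow_six_neg_two_sub_three_mul_mul : ((-2 - 3 * ω) * β) ^ 6 = 74 + 720 * ω := by
  linear_combination (-2 - 3 * ω) ^ 6 * hβ
    + (54 + 378 * ω + 3888 * ω ^ 2 + 4374 * ω ^ 3 + 1458 * ω ^ 4) * hω

theorem aeval_eq_mul_pow_six_sub (y : ℂ) :
    aeval y (X ^ 12 + C (572 : ℚ) * X ^ 6 + C (470596 : ℚ)) =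
      (y ^ 6 - ((1 + 3 * ω) * β) ^ 6) * (y ^ 6 - ((-2 - 3 * ω) * β) ^ 6) := by
  rw [pow_six_one_add_three_mul_mul hω hβ, pow_six_neg_two_sub_three_mul_mul hω hβ]
  simp only [map_add, map_mul, map_pow, aeval_X, aeval_C, eq_ratCast]
  push_cast
  linear_combination 518400 * hω

theorem aeval_one_add_three_mul_mul :
    aeval ((1 + 3 * ω) * β) (X ^ 12 + C (572 : ℚ) * X ^ 6 + C (470596 : ℚ)) = 0 := by
  rw [aeval_eq_mul_pow_six_sub hω hβ, sub_self, zero_mul]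

theorem isIntegral_one_add_three_mul_mul : IsIntegral ℚ ((1 + 3 * ω) * β) :=
  ⟨_, by monicity!, aeval_one_add_three_mul_mul hω hβ⟩

end

theorem twelve_le_finrank_adjoin {ω : ℂ} (hω : ω ^ 2 + ω + 1 = 0) {r : ℝ} (hr : r ^ 6 = 2) :
    12 ≤ Module.finrank ℚ ℚ⟮(1 + 3 * ω) * r⟯ := by
  set α := (1 + 3 * ω) * (r : ℂ)
  have hr' : (r : ℂ) ^ 6 = 2 := by exact_mod_cast hr
  have hαα : α ∈ ℚ⟮α⟯ := mem_adjoin_simple_self ℚ α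
  have hωα : ω ∈ ℚ⟮α⟯ := by
    have : ω = (-1 / 720 : ℚ) • (α ^ 6 + (646 : ℚ)) := by
      rw [Rat.smul_def, pow_six_one_add_three_mul_mul hω hr']
      push_cast
      ring
    rw [this]
    exact smul_mem _ (add_mem (pow_mem hαα 6) (IntermediateField.algebraMap_mem _ _))
  have hrα : (r : ℂ) ∈ ℚ⟮α⟯ := by
    have h3 : 1 + 3 * ω ≠ 0 := fun h =>
      Complex.im_ne_zero_of_sq_add_self_add_one hω (by simpa using congrArg Complex.im h)
    have : (r : ℂ) = α * (1 + 3 * ω)⁻¹ := (eq_mul_inv_iff_mul_eq₀ h3).mpr (mul_comm _ _)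
    rw [this]
    exact mul_mem hαα
      (inv_mem (add_mem (one_mem _) (mul_mem (IntermediateField.algebraMap_mem _ (3 : ℚ)) hωα)))
  have hlt : ℚ⟮(r : ℂ)⟯ < ℚ⟮α⟯ := lt_of_le_of_ne (adjoin_simple_le_iff.mpr hrα) fun h =>
    Complex.im_ne_zero_of_sq_add_self_add_one hω (im_eq_zero_of_mem_adjoin_ofReal (h ▸ hωα))
  have : FiniteDimensional ℚ ℚ⟮α⟯ :=
    adjoin.finiteDimensional (isIntegral_one_add_three_mul_mul hω hr')
  have := two_mul_finrank_le_of_lt hlt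
  rw [finrank_adjoin_of_pow_eq_prime Nat.prime_two (by norm_num) hr'] at this
  omega

theorem span_rootSet_eq_span_pair {ω β : ℂ} (hω : IsPrimitiveRoot ω 3) (hβ : β ^ 6 = 2) :
    Submodule.span ℚ ((X ^ 12 + C (572 : ℚ) * X ^ 6 + C (470596 : ℚ)).rootSet ℂ) =
      Submodule.span ℚ {β, ω * β} := by
  have hω2 := hω.sq_add_self_add_one
  have hroot : ∀ y, y ∈ (X ^ 12 + C (572 : ℚ) * X ^ 6 + C (470596 : ℚ)).rootSet ℂ ↔
      (y ^ 6 - ((1 + 3 * ω) * β) ^ 6) * (y ^ 6 - ((-2 - 3 * ω) * β) ^ 6) = 0 := fun y => by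
    rw [mem_rootSet_of_ne (Monic.ne_zero (by monicity!)), aeval_eq_mul_pow_six_sub hω2 hβ]
  have hα : (1 + 3 * ω) * β ∈ Submodule.span ℚ {β, ω * β} :=
    Submodule.mem_span_pair.mpr ⟨1, 3, by simp only [Rat.smul_def]; push_cast; ring⟩
  have hα' : (-2 - 3 * ω) * β ∈ Submodule.span ℚ {β, ω * β} :=
    Submodule.mem_span_pair.mpr ⟨-2, -3, by simp only [Rat.smul_def]; push_cast; ring⟩
  apply le_antisymm
  · rw [Submodule.span_le]
    intro y hy
    rcases mul_eq_zero.mp ((hroot y).mp hy) with h | h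
    · exact mem_of_pow_six_eq_pow_six hω (fun _ => mul_mem_span_pair hω2 β) hα (sub_eq_zero.mp h)
    · exact mem_of_pow_six_eq_pow_six hω (fun _ => mul_mem_span_pair hω2 β) hα' (sub_eq_zero.mp h)
  · have hαS := Submodule.subset_span (R := ℚ) ((hroot _).mpr (by rw [sub_self, zero_mul]))
    have hα'S :=
      Submodule.subset_span (R := ℚ) ((hroot ((-2 - 3 * ω) * β)).mpr (by rw [sub_self, mul_zero]))
    have hβS :
        β ∈ Submodule.span ℚ ((X ^ 12 + C (572 : ℚ) * X ^ 6 + C (470596 : ℚ)).rootSet ℂ) := by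
      rw [show β = -((1 + 3 * ω) * β) - (-2 - 3 * ω) * β by ring]
      exact sub_mem (neg_mem hαS) hα'S
    rw [Submodule.span_le, Set.pair_subset_iff]
    refine ⟨hβS, ?_⟩
    rw [show ω * β = (3⁻¹ : ℚ) • ((1 + 3 * ω) * β - β) by rw [Rat.smul_def]; push_cast; ring]
    exact Submodule.smul_mem _ _ (sub_mem hαS hβS)

/-- An explicit algebraic number attaining `d_max(2) = 12`: let `β` be the real
sixth root of `2` and `ω` a primitive cube root of unity.  Then
`α = β + 3ωβ` has minimal polynomial `y¹² + 572y⁶ + 470596` over `ℚ`, degree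
`12`, and its conjugates span a `ℚ`-vector space of dimension `2`. -/
theorem stmt_10 (ω : ℂ) (hω : IsPrimitiveRoot ω 3)
    (β : ℂ) (hβ : β = ((2 : ℝ) ^ ((6 : ℝ)⁻¹) : ℝ))
    (α : ℂ) (hα : α = β + 3 * ω * β) :
    minpoly ℚ α = X ^ 12 + C (572 : ℚ) * X ^ 6 + C (470596 : ℚ) ∧
    (minpoly ℚ α).natDegree = 12 ∧
    Module.finrank ℚ (Submodule.span ℚ ((minpoly ℚ α).rootSet ℂ)) = 2 := by
  have hω2 := hω.sq_add_self_add_one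
  have hr : ((2 : ℝ) ^ ((6 : ℝ)⁻¹)) ^ 6 = 2 := by
    rw [← Real.rpow_natCast, ← Real.rpow_mul (by norm_num)]
    norm_num
  have hβ6 : β ^ 6 = 2 := by rw [hβ]; exact_mod_cast hr
  have hint := isIntegral_one_add_three_mul_mul hω2 hβ6
  have hmin : minpoly ℚ α = X ^ 12 + C (572 : ℚ) * X ^ 6 + C (470596 : ℚ) := by
    rw [show α = (1 + 3 * ω) * β by rw [hα]; ring]
    refine (eq_of_monic_of_dvd_of_natDegree_le (minpoly.monic hint) (by monicity!)
      (minpoly.dvd _ _ (aeval_one_add_three_mul_mul hω2 hβ6)) ?_).symm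
    rw [← adjoin.finrank hint, hβ]
    exact le_of_eq_of_le (by compute_degree!) (twelve_le_finrank_adjoin hω2 hr)
  refine ⟨hmin, by rw [hmin]; compute_degree!, ?_⟩
  rw [hmin, span_rootSet_eq_span_pair hω hβ6]
  exact finrank_span_pair_self_mul (Complex.im_ne_zero_of_sq_add_self_add_one hω2)
    (by rintro rfl; norm_num at hβ6)
end
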